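/- arXiv:2409.16713 — 7 statements merged into one kernel-verified Lean document; each statement's English description precedes it below -/
import Mathlib

section
/- Let Γ be a uniform coincidence constraint (a set of profiles A → ℕ) that contains the zero profile and is closed under pointwise addition. If E₀ : C → M satisfies Γ, then for every function g : M → M the composition g ∘ E₀ also satisfies Γ. (Merging whole value-classes of a consistent database preserves consistency.) -/
/-!
The profile of `g ∘ E₀` at `v` is the sum of the profiles of `E₀` at the finitely many values `u`
of `E₀` with `g u = v`. A set of profiles containing `0` and closed under addition is an additive
submonoid, hence closed under finite sums.
-/

open Finset

section

variable {C A M N : Type*}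

noncomputable def coincidenceProfile (lab : C → A) (E : C → M) (v : M) : A → ℕ :=
  fun a => {c | lab c = a ∧ E c = v}.ncard

theorem ncard_setOf_and_comp_eq_sum [Fintype C] [DecidableEq M] [DecidableEq N] (P : C → Prop)
    (E : C → M) (g : M → N) (v : N) :
    {c | P c ∧ g (E c) = v}.ncard =
      ∑ u ∈ univ.image E with g u = v, {c | P c ∧ E c = u}.ncard := by
  have hfiber : {c | P c ∧ g (E c) = v} =
      ⋃ u ∈ (↑{u ∈ univ.image E | g u = v} : Set M), {c | P c ∧ E c = u} := by
    ext c
    simp only [Set.mem_ofPred_eq, coe_filter, mem_image, mem_univ, true_and, Set.mem_iUnion,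
      exists_prop]
    grind
  rw [hfiber, Set.Finite.ncard_biUnion (Finset.finite_toSet _) (fun _ _ => Set.toFinite _),
    finsum_mem_coe_finset]
  intro u _ w _ huw
  exact Set.disjoint_left.2 fun c hu hw => huw (hu.2.symm.trans hw.2)

theorem coincidenceProfile_comp [Fintype C] [DecidableEq M] [DecidableEq N] (lab : C → A)
    (E : C → M) (g : M → N) (v : N) :
    coincidenceProfile lab (g ∘ E) v =
      ∑ u ∈ univ.image E with g u = v, coincidenceProfile lab E u := by
  funext a
  rw [Finset.sum_apply]
  exact ncard_setOf_and_comp_eq_sum _ E g v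

end

/-- If a uniform coincidence constraint `Γ` contains the zero profile and is closed
under pointwise addition, and `E₀ : C → M` satisfies `Γ`, then for every `g : M → M`
the composition `g ∘ E₀` also satisfies `Γ`. -/
theorem stmt_1 {C A M : Type*} [Finite C] (lab : C → A)
    (Γ : Set (A → ℕ))
    (hzero : (fun _ => 0) ∈ Γ)
    (hadd : ∀ p q : A → ℕ, p ∈ Γ → q ∈ Γ → (fun a => p a + q a) ∈ Γ)
    (E₀ : C → M)
    (hE₀ : ∀ v : M, (fun a => {c : C | lab c = a ∧ E₀ c = v}.ncard) ∈ Γ)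
    (g : M → M) :
    ∀ v : M, (fun a => {c : C | lab c = a ∧ g (E₀ c) = v}.ncard) ∈ Γ := by
  classical
  have := Fintype.ofFinite C
  let Γ' : AddSubmonoid (A → ℕ) := ⟨⟨Γ, hadd _ _⟩, hzero⟩
  intro v
  show coincidenceProfile lab (g ∘ E₀) v ∈ Γ'
  rw [coincidenceProfile_comp]
  exact Γ'.sum_mem fun u _ => hE₀ u
end

section
/- Let δ be a nonnegative distance function on a set M, Γ a coincidence constraint over M, and D : C → M a database. Let T be a finite index set, μ : T → ℝ a probability weight function (μ(t) ≥ 0 and ∑_{t∈T} μ(t) = 1), and for each t ∈ T let δ_t : M × M → ℝ satisfy δ(u, v) ≤ δ_t(u, v) for all u, v ∈ M. Assume K ≥ 0 is such that ∑_{t∈T} μ(t)·δ_t(u, v) ≤ K·δ(u, v) for all u, v ∈ M. For each t let E_t be a repair of D that minimizes cost with respect to δ_t (κ(D, E_t, δ_t) ≤ κ(D, E', δ_t) for every repair E'), and let E_opt be any repair of D. Then ∑_{t∈T} μ(t)·κ(D, E_t, δ) ≤ K·κ(D, E_opt, δ). -/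
/-!
Optimality of `E t` for `δ_t` and the domination `δ ≤ δ_t` give
`κ(D, E t, δ) ≤ κ(D, E t, δ_t) ≤ κ(D, E_opt, δ_t)`. The cost is linear in the distance,
so averaging over `μ` turns the right-hand side into the cost of `E_opt` for the averaged
distance `∑ t, μ t * δ_t`, which is at most `K • δ`.
-/

open Finset

section RepairCost

variable {C A M : Type*} [Fintype C] (lab : C → A) (w : A → ℝ) (D : C → M)

/-- The cost `κ(D, E, δ)` of `E` relative to `D`. -/
def repairCost (δ : M → M → ℝ) (E : C → M) : ℝ :=
  ∑ c, w (lab c) * δ (D c) (E c)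

variable {lab w D}

lemma repairCost_mono (hw : ∀ a, 0 ≤ w a) {δ δ' : M → M → ℝ} (h : ∀ u v, δ u v ≤ δ' u v)
    (E : C → M) : repairCost lab w D δ E ≤ repairCost lab w D δ' E :=
  sum_le_sum fun _ _ => mul_le_mul_of_nonneg_left (h _ _) (hw _)

lemma repairCost_const_mul (K : ℝ) (δ : M → M → ℝ) (E : C → M) :
    repairCost lab w D (fun u v => K * δ u v) E = K * repairCost lab w D δ E := by
  simp only [repairCost, mul_sum]
  exact sum_congr rfl fun c _ => by ring

lemma sum_mul_repairCost {T : Type*} [Fintype T] (μ : T → ℝ) (δt : T → M → M → ℝ)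
    (E : C → M) :
    ∑ t, μ t * repairCost lab w D (δt t) E =
      repairCost lab w D (fun u v => ∑ t, μ t * δt t u v) E := by
  simp only [repairCost, mul_sum]
  rw [sum_comm]
  exact sum_congr rfl fun c _ => sum_congr rfl fun t _ => by ring

end RepairCost

theorem stmt_4_general {C A M T : Type*} [Fintype C] [Fintype T]
    (lab : C → A) (w : A → ℝ) (hw : ∀ a, 0 ≤ w a)
    (δ : M → M → ℝ)
    (Γ : M → Set (A → ℕ)) (D : C → M)
    (μ : T → ℝ) (hμ : ∀ t, 0 ≤ μ t)
    (δt : T → M → M → ℝ) (hδt : ∀ t u v, δ u v ≤ δt t u v)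
    (K : ℝ)
    (hKbound : ∀ u v, ∑ t : T, μ t * δt t u v ≤ K * δ u v)
    (E : T → C → M)
    (hEmin : ∀ t, ∀ E' : C → M,
      (∀ v : M, (fun a => {c : C | lab c = a ∧ E' c = v}.ncard) ∈ Γ v) →
      ∑ c : C, w (lab c) * δt t (D c) (E t c) ≤
        ∑ c : C, w (lab c) * δt t (D c) (E' c))
    (Eopt : C → M)
    (hEopt : ∀ v : M, (fun a => {c : C | lab c = a ∧ Eopt c = v}.ncard) ∈ Γ v) :
    ∑ t : T, μ t * ∑ c : C, w (lab c) * δ (D c) (E t c) ≤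
      K * ∑ c : C, w (lab c) * δ (D c) (Eopt c) := by
  have hE_le_opt : ∀ t, repairCost lab w D δ (E t) ≤ repairCost lab w D (δt t) Eopt :=
    fun t => (repairCost_mono hw (hδt t) (E t)).trans (hEmin t Eopt hEopt)
  calc ∑ t, μ t * repairCost lab w D δ (E t)
      ≤ ∑ t, μ t * repairCost lab w D (δt t) Eopt :=
        sum_le_sum fun t _ => mul_le_mul_of_nonneg_left (hE_le_opt t) (hμ t)
    _ = repairCost lab w D (fun u v => ∑ t, μ t * δt t u v) Eopt := sum_mul_repairCost μ δt Eopt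
    _ ≤ repairCost lab w D (fun u v => K * δ u v) Eopt := repairCost_mono hw hKbound Eopt
    _ = K * repairCost lab w D δ Eopt := repairCost_const_mul K δ Eopt

/-- Expected-cost bound for the random tree-embedding repair scheme: if each `δ_t`
dominates `δ`, the `μ`-average of the `δ_t` is at most `K·δ`, and each `E t` is an
optimal repair w.r.t. `δ_t`, then the `μ`-average of the `δ`-costs of the `E t` is at
most `K` times the `δ`-cost of any repair `E_opt`. -/
theorem stmt_4 {C A M T : Type*} [Fintype C] [Fintype T]
    (lab : C → A) (w : A → ℝ) (hw : ∀ a, 0 ≤ w a)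
    (δ : M → M → ℝ) (hδ : ∀ u v, 0 ≤ δ u v)
    (Γ : M → Set (A → ℕ)) (D : C → M)
    (μ : T → ℝ) (hμ : ∀ t, 0 ≤ μ t) (hμ1 : ∑ t : T, μ t = 1)
    (δt : T → M → M → ℝ) (hδt : ∀ t u v, δ u v ≤ δt t u v)
    (K : ℝ) (hK : 0 ≤ K)
    (hKbound : ∀ u v, ∑ t : T, μ t * δt t u v ≤ K * δ u v)
    (E : T → C → M)
    (hE : ∀ t, ∀ v : M, (fun a => {c : C | lab c = a ∧ E t c = v}.ncard) ∈ Γ v)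
    (hEmin : ∀ t, ∀ E' : C → M,
      (∀ v : M, (fun a => {c : C | lab c = a ∧ E' c = v}.ncard) ∈ Γ v) →
      ∑ c : C, w (lab c) * δt t (D c) (E t c) ≤
        ∑ c : C, w (lab c) * δt t (D c) (E' c))
    (Eopt : C → M)
    (hEopt : ∀ v : M, (fun a => {c : C | lab c = a ∧ Eopt c = v}.ncard) ∈ Γ v) :
    ∑ t : T, μ t * ∑ c : C, w (lab c) * δ (D c) (E t c) ≤
      K * ∑ c : C, w (lab c) * δ (D c) (Eopt c) :=
  stmt_4_general lab w hw δ Γ D μ hμ δt hδt K hKbound E hEmin Eopt hEopt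
end

section
/- Let δ be a nonnegative distance function on a set M, Γ a coincidence constraint over M, and D : C → M a database. Let T be a finite index set, μ : T → ℝ a probability weight function (μ(t) ≥ 0 and ∑_{t∈T} μ(t) = 1), and for each t ∈ T let δ_t : M × M → ℝ satisfy δ(u, v) ≤ δ_t(u, v) for all u, v ∈ M. Assume K ≥ 0 is such that ∑_{t∈T} μ(t)·δ_t(u, v) ≤ K·δ(u, v) for all u, v ∈ M. For each t let E_t be a repair of D minimizing cost with respect to δ_t, and let E_opt be a repair of D with κ(D, E_opt, δ) > 0. Then ∑_{t ∈ T, κ(D, E_t, δ) ≤ 2K·κ(D, E_opt, δ)} μ(t) ≥ 1/2; that is, with probability at least 1/2 over the choice of t, the repair E_t has cost at most 2K times the cost of E_opt under δ. -/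
/-!
Since `δ ≤ δ_t` and `E_t` is `δ_t`-optimal, `κ(D, E_t, δ) ≤ κ(D, E_t, δ_t) ≤ κ(D, E_opt, δ_t)`.
Averaging over `t` and using `∑ μ(t) δ_t ≤ K δ` bounds the expected cost of `E_t` by
`K κ(D, E_opt, δ)`, and Markov's inequality for the nonnegative cost gives the bound `1/2`.
-/

open Finset

theorem one_half_le_sum_filter_le_two_mul {T : Type*} [Fintype T] (μ X : T → ℝ)
    (hμ : ∀ t, 0 ≤ μ t) (hμ1 : ∑ t, μ t = 1) (hX : ∀ t, 0 ≤ X t) {m : ℝ}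
    (hm : ∑ t, μ t * X t ≤ m) [DecidablePred fun t => X t ≤ 2 * m] :
    1 / 2 ≤ ∑ t ∈ univ.filter (fun t => X t ≤ 2 * m), μ t := by
  have hμX : ∀ t, 0 ≤ μ t * X t := fun t => mul_nonneg (hμ t) (hX t)
  have hm0 : 0 ≤ m := (sum_nonneg fun t _ => hμX t).trans hm
  set B := univ.filter (fun t => ¬X t ≤ 2 * m)
  have hsplit := sum_filter_add_sum_filter_not univ (fun t => X t ≤ 2 * m) μ
  by_contra! hsmall
  have hB : 1 / 2 < ∑ t ∈ B, μ t := by linarith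
  -- A point of positive weight beyond the threshold makes the bound strict, also when `m = 0`.
  obtain ⟨t₀, ht₀, hμt₀⟩ : ∃ t ∈ B, 0 < μ t :=
    exists_lt_of_sum_lt (by simpa using hB.trans' one_half_pos)
  have hstrict : ∑ t ∈ B, μ t * (2 * m) < ∑ t ∈ B, μ t * X t :=
    sum_lt_sum (fun t ht => mul_le_mul_of_nonneg_left (not_le.1 (mem_filter.1 ht).2).le (hμ t))
      ⟨t₀, ht₀, mul_lt_mul_of_pos_left (not_le.1 (mem_filter.1 ht₀).2) hμt₀⟩
  have hsub : ∑ t ∈ B, μ t * X t ≤ ∑ t, μ t * X t :=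
    sum_le_sum_of_subset_of_nonneg (subset_univ B) fun t _ _ => hμX t
  rw [← sum_mul] at hstrict
  nlinarith

section Repair

variable {C A M : Type*} [Fintype C] (lab : C → A) (w : A → ℝ)

noncomputable def profile (E : C → M) (v : M) : A → ℕ :=
  fun a => {c : C | lab c = a ∧ E c = v}.ncard

def IsRepair (Γ : M → Set (A → ℕ)) (E : C → M) : Prop := ∀ v, profile lab E v ∈ Γ v

def cost (δ : M → M → ℝ) (D E : C → M) : ℝ := ∑ c, w (lab c) * δ (D c) (E c)

variable {lab w}

theorem cost_nonneg (hw : ∀ a, 0 ≤ w a) {δ : M → M → ℝ} (hδ : ∀ u v, 0 ≤ δ u v)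
    (D E : C → M) : 0 ≤ cost lab w δ D E :=
  sum_nonneg fun _ _ => mul_nonneg (hw _) (hδ _ _)

theorem cost_mono (hw : ∀ a, 0 ≤ w a) {δ δ' : M → M → ℝ} (h : ∀ u v, δ u v ≤ δ' u v)
    (D E : C → M) : cost lab w δ D E ≤ cost lab w δ' D E :=
  sum_le_sum fun _ _ => mul_le_mul_of_nonneg_left (h _ _) (hw _)

theorem sum_mul_cost {T : Type*} [Fintype T] (μ : T → ℝ) (δ : T → M → M → ℝ) (D E : C → M) :
    ∑ t, μ t * cost lab w (δ t) D E = cost lab w (fun u v => ∑ t, μ t * δ t u v) D E := by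
  simp only [cost, mul_sum]
  rw [sum_comm]
  exact sum_congr rfl fun _ _ => sum_congr rfl fun _ _ => by ring

theorem cost_const_mul (K : ℝ) (δ : M → M → ℝ) (D E : C → M) :
    cost lab w (fun u v => K * δ u v) D E = K * cost lab w δ D E := by
  simp only [cost, mul_sum]
  exact sum_congr rfl fun _ _ => by ring

theorem sum_mul_cost_le_mul_cost {T : Type*} [Fintype T] (hw : ∀ a, 0 ≤ w a)
    {Γ : M → Set (A → ℕ)} {δ : M → M → ℝ} {D : C → M} {μ : T → ℝ} (hμ : ∀ t, 0 ≤ μ t)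
    {δt : T → M → M → ℝ} (hδt : ∀ t u v, δ u v ≤ δt t u v) {K : ℝ}
    (hKbound : ∀ u v, ∑ t, μ t * δt t u v ≤ K * δ u v) {E : T → C → M}
    (hEmin : ∀ t E', IsRepair lab Γ E' → cost lab w (δt t) D (E t) ≤ cost lab w (δt t) D E')
    {Eopt : C → M} (hEopt : IsRepair lab Γ Eopt) :
    ∑ t, μ t * cost lab w δ D (E t) ≤ K * cost lab w δ D Eopt :=
  calc ∑ t, μ t * cost lab w δ D (E t)
      ≤ ∑ t, μ t * cost lab w (δt t) D Eopt := sum_le_sum fun t _ =>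
        mul_le_mul_of_nonneg_left ((cost_mono hw (hδt t) D (E t)).trans (hEmin t Eopt hEopt))
          (hμ t)
    _ = cost lab w (fun u v => ∑ t, μ t * δt t u v) D Eopt := sum_mul_cost μ δt D Eopt
    _ ≤ cost lab w (fun u v => K * δ u v) D Eopt := cost_mono hw hKbound D Eopt
    _ = K * cost lab w δ D Eopt := cost_const_mul K δ D Eopt

end Repair

open Classical in
theorem stmt_5_general {C A M T : Type*} [Fintype C] [Fintype T]
    (lab : C → A) (w : A → ℝ) (hw : ∀ a, 0 ≤ w a)
    (δ : M → M → ℝ) (hδ : ∀ u v, 0 ≤ δ u v)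
    (Γ : M → Set (A → ℕ)) (D : C → M)
    (μ : T → ℝ) (hμ : ∀ t, 0 ≤ μ t) (hμ1 : ∑ t : T, μ t = 1)
    (δt : T → M → M → ℝ) (hδt : ∀ t u v, δ u v ≤ δt t u v)
    (K : ℝ)
    (hKbound : ∀ u v, ∑ t : T, μ t * δt t u v ≤ K * δ u v)
    (E : T → C → M)
    (hEmin : ∀ t, ∀ E' : C → M,
      (∀ v : M, (fun a => {c : C | lab c = a ∧ E' c = v}.ncard) ∈ Γ v) →
      ∑ c : C, w (lab c) * δt t (D c) (E t c) ≤
        ∑ c : C, w (lab c) * δt t (D c) (E' c))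
    (Eopt : C → M)
    (hEopt : ∀ v : M, (fun a => {c : C | lab c = a ∧ Eopt c = v}.ncard) ∈ Γ v) :
    (1 : ℝ) / 2 ≤
      ∑ t ∈ Finset.univ.filter (fun t : T =>
          ∑ c : C, w (lab c) * δ (D c) (E t c) ≤
            2 * K * ∑ c : C, w (lab c) * δ (D c) (Eopt c)),
        μ t := by
  have hexp : ∑ t, μ t * cost lab w δ D (E t) ≤ K * cost lab w δ D Eopt :=
    sum_mul_cost_le_mul_cost hw hμ hδt hKbound hEmin hEopt
  rw [mul_assoc]
  exact one_half_le_sum_filter_le_two_mul μ _ hμ hμ1 (fun t => cost_nonneg hw hδ D (E t)) hexp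

open Classical in
/-- Markov-inequality step: with probability at least `1/2` over the random choice of
`t`, the optimal repair `E t` for `δ_t` has `δ`-cost at most `2K` times the `δ`-cost of
the repair `E_opt`. -/
theorem stmt_5 {C A M T : Type*} [Fintype C] [Fintype T]
    (lab : C → A) (w : A → ℝ) (hw : ∀ a, 0 ≤ w a)
    (δ : M → M → ℝ) (hδ : ∀ u v, 0 ≤ δ u v)
    (Γ : M → Set (A → ℕ)) (D : C → M)
    (μ : T → ℝ) (hμ : ∀ t, 0 ≤ μ t) (hμ1 : ∑ t : T, μ t = 1)
    (δt : T → M → M → ℝ) (hδt : ∀ t u v, δ u v ≤ δt t u v)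
    (K : ℝ) (hK : 0 ≤ K)
    (hKbound : ∀ u v, ∑ t : T, μ t * δt t u v ≤ K * δ u v)
    (E : T → C → M)
    (hE : ∀ t, ∀ v : M, (fun a => {c : C | lab c = a ∧ E t c = v}.ncard) ∈ Γ v)
    (hEmin : ∀ t, ∀ E' : C → M,
      (∀ v : M, (fun a => {c : C | lab c = a ∧ E' c = v}.ncard) ∈ Γ v) →
      ∑ c : C, w (lab c) * δt t (D c) (E t c) ≤
        ∑ c : C, w (lab c) * δt t (D c) (E' c))
    (Eopt : C → M)
    (hEopt : ∀ v : M, (fun a => {c : C | lab c = a ∧ Eopt c = v}.ncard) ∈ Γ v)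
    (hpos : 0 < ∑ c : C, w (lab c) * δ (D c) (Eopt c)) :
    (1 : ℝ) / 2 ≤
      ∑ t ∈ Finset.univ.filter (fun t : T =>
          ∑ c : C, w (lab c) * δ (D c) (E t c) ≤
            2 * K * ∑ c : C, w (lab c) * δ (D c) (Eopt c)),
        μ t :=
  stmt_5_general lab w hw δ hδ Γ D μ hμ hμ1 δt hδt K hKbound E hEmin Eopt hEopt
end

section
/- Let I be a finite index set partitioned into disjoint sets L and R, let a_i (i ∈ I) and v, v' be real numbers, and let w_i ≥ 0 for all i ∈ I. Assume v' ≤ v, a_i ≤ v' for every i ∈ L, a_i ≥ v for every i ∈ R, and ∑_{i∈R} w_i ≤ ∑_{i∈L} w_i. Then ∑_{i∈I} w_i·|a_i − v'| ≤ ∑_{i∈I} w_i·|a_i − v|. (Moving a group of co-located cells toward the heavier side of their weighted median does not increase total weighted movement cost.) -/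
/-!
Lowering the target from `v` to `v'` saves exactly `v - v'` per unit of weight on the left
block (which lies below `v'`) and costs exactly `v - v'` per unit of weight on the right block
(which lies above `v`), so the total cost changes by `(v - v') * (∑_R w - ∑_L w) ≤ 0`.
-/

open Finset

lemma abs_sub_eq_abs_sub_sub_of_le {a v v' : ℝ} (ha : a ≤ v') (hvv : v' ≤ v) :
    |a - v'| = |a - v| - (v - v') := by
  rw [abs_of_nonpos (by linarith), abs_of_nonpos (by linarith)]
  ring

lemma abs_sub_eq_abs_sub_add_of_le {a v v' : ℝ} (hvv : v' ≤ v) (ha : v ≤ a) :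
    |a - v'| = |a - v| + (v - v') := by
  rw [abs_of_nonneg (by linarith), abs_of_nonneg (by linarith)]
  ring

lemma sum_mul_abs_sub_union_eq {ι : Type*} [DecidableEq ι] {L R : Finset ι}
    (hdisj : Disjoint L R) (a w : ι → ℝ) {v v' : ℝ} (hvv : v' ≤ v)
    (hL : ∀ i ∈ L, a i ≤ v') (hR : ∀ i ∈ R, v ≤ a i) :
    ∑ i ∈ L ∪ R, w i * |a i - v'| =
      ∑ i ∈ L ∪ R, w i * |a i - v| + (v - v') * (∑ i ∈ R, w i - ∑ i ∈ L, w i) := by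
  have hLsum : ∑ i ∈ L, w i * |a i - v'| =
      ∑ i ∈ L, w i * |a i - v| - (v - v') * ∑ i ∈ L, w i := by
    rw [mul_sum, ← sum_sub_distrib]
    refine sum_congr rfl fun i hi => ?_
    rw [abs_sub_eq_abs_sub_sub_of_le (hL i hi) hvv]
    ring
  have hRsum : ∑ i ∈ R, w i * |a i - v'| =
      ∑ i ∈ R, w i * |a i - v| + (v - v') * ∑ i ∈ R, w i := by
    rw [mul_sum, ← sum_add_distrib]
    refine sum_congr rfl fun i hi => ?_
    rw [abs_sub_eq_abs_sub_add_of_le hvv (hR i hi)]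
    ring
  rw [sum_union hdisj, sum_union hdisj, hLsum, hRsum]
  ring

theorem stmt_9_general {ι : Type*} [DecidableEq ι] (I L R : Finset ι)
    (hdisj : Disjoint L R) (hpart : L ∪ R = I)
    (a : ι → ℝ) (w : ι → ℝ)
    (v v' : ℝ) (hvv : v' ≤ v)
    (hL : ∀ i ∈ L, a i ≤ v') (hR : ∀ i ∈ R, v ≤ a i)
    (hwt : ∑ i ∈ R, w i ≤ ∑ i ∈ L, w i) :
    ∑ i ∈ I, w i * |a i - v'| ≤ ∑ i ∈ I, w i * |a i - v| := by
  subst hpart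
  rw [sum_mul_abs_sub_union_eq hdisj a w hvv hL hR]
  have hshift : (v - v') * (∑ i ∈ R, w i - ∑ i ∈ L, w i) ≤ 0 :=
    mul_nonpos_of_nonneg_of_nonpos (sub_nonneg.mpr hvv) (sub_nonpos.mpr hwt)
  linarith

/-- Moving a group of co-located cells toward the heavier side of their weighted median
does not increase total weighted movement cost: with `I = L ∪ R` disjoint, `v' ≤ v`,
`a i ≤ v'` on `L`, `a i ≥ v` on `R`, and `∑_R w ≤ ∑_L w`, we get
`∑_I w i·|a i − v'| ≤ ∑_I w i·|a i − v|`. -/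
theorem stmt_9 {ι : Type*} [DecidableEq ι] (I L R : Finset ι)
    (hdisj : Disjoint L R) (hpart : L ∪ R = I)
    (a : ι → ℝ) (w : ι → ℝ) (hw : ∀ i ∈ I, 0 ≤ w i)
    (v v' : ℝ) (hvv : v' ≤ v)
    (hL : ∀ i ∈ L, a i ≤ v') (hR : ∀ i ∈ R, v ≤ a i)
    (hwt : ∑ i ∈ R, w i ≤ ∑ i ∈ L, w i) :
    ∑ i ∈ I, w i * |a i - v'| ≤ ∑ i ∈ I, w i * |a i - v| :=
  stmt_9_general I L R hdisj hpart a w v v' hvv hL hR hwt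
end

section
/- Let M ⊆ ℝ be a finite set with δ(x, y) = |x − y|, let Γ be a coincidence constraint over M such that for every v ∈ M the set Γ(v) contains the zero profile and is closed under pointwise addition, let w : A → ℝ be nonnegative weights, τ ≥ 0, and let D : C → M be a database with C nonempty. If D has a (δ≤τ)-repair, then there exist an optimal (δ≤τ)-repair E of D (one of minimum cost among all (δ≤τ)-repairs of D) and a strict prefix C' ⊊ C of D such that: (i) the restriction of E to C' is an optimal (δ≤τ)-repair of the restricted database D|C'; and (ii) E is constant on C ∖ C'. -/
/-!
Among the optimal repairs choose one, `E`, that maximises `∑ D c * E c`. Swapping the values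
of two cells `c, c'` with the same label and `D c < D c'` preserves every coincidence profile
and the `τ`-bounds, and on the line it does not increase the cost when `E c > E c'`; it would
strictly increase `∑ D c * E c`, so `E` is monotone along `D` within each label. Hence the
cells where `E` is below its maximum value `v` form a strict prefix `C'`. Removing the cells
with value `v` empties the profile of `v`, so `E` stays a repair on `C'`; conversely any repair
of `D|C'` glued with `E` off `C'` is a repair of `D`, because profiles add up. So `E` is optimal
on `C'` as well.
-/

/-- `E` is a `(δ≤τ)`-repair of the restriction of `D` to the cell set `S`: on `S` it
takes values in `M`, its coincidence profiles (counted over `S`) are allowed by `Γ`,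
and every cell of `S` moves by at most `w(λ(c))·τ`. -/
def IsTauRepairOn {C A : Type*} (S : Set C) (lab : C → A) (w : A → ℝ)
    (M : Set ℝ) (Γ : ℝ → Set (A → ℕ)) (τ : ℝ) (D E : C → ℝ) : Prop :=
  (∀ c ∈ S, E c ∈ M) ∧
  (∀ v ∈ M, (fun a => {c : C | c ∈ S ∧ lab c = a ∧ E c = v}.ncard) ∈ Γ v) ∧
  (∀ c ∈ S, |D c - E c| ≤ w (lab c) * τ)

/-- Cost of `E` relative to `D`, restricted to the cell set `S`. -/
noncomputable def costOn {C A : Type*} [Fintype C] (S : Set C)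
    (lab : C → A) (w : A → ℝ) (D E : C → ℝ) : ℝ :=
  ∑ c : C, S.indicator (fun c => w (lab c) * |D c - E c|) c

open Set

lemma abs_sub_add_abs_sub_le_of_le {a b x y : ℝ} (hab : a ≤ b) (hxy : x ≤ y) :
    |a - x| + |b - y| ≤ |a - y| + |b - x| := by
  rcases abs_cases (a - x) with ⟨h₁, h₁'⟩ | ⟨h₁, h₁'⟩ <;>
  rcases abs_cases (b - y) with ⟨h₂, h₂'⟩ | ⟨h₂, h₂'⟩ <;>
  rcases abs_cases (a - y) with ⟨h₃, h₃'⟩ | ⟨h₃, h₃'⟩ <;>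
  rcases abs_cases (b - x) with ⟨h₄, h₄'⟩ | ⟨h₄, h₄'⟩ <;>
  linarith

lemma Set.Finite.exists_min_image_max_image {α : Type*} {s : Set α} (hs : s.Finite)
    (hne : s.Nonempty) (f g : α → ℝ) :
    ∃ a ∈ s, (∀ b ∈ s, f a ≤ f b) ∧ ∀ b ∈ s, f b ≤ f a → g b ≤ g a := by
  obtain ⟨a₀, ha₀, hmin⟩ := s.exists_min_image f hs hne
  obtain ⟨a, ⟨ha, hfa⟩, hmax⟩ := {b ∈ s | f b ≤ f a₀}.exists_max_image g
    (hs.subset (sep_subset _ _)) ⟨a₀, ha₀, le_rfl⟩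
  exact ⟨a, ha, fun b hb => hfa.trans (hmin b hb),
    fun b hb hfb => hmax b ⟨hb, hfb.trans hfa⟩⟩

lemma Fintype.sum_comp_swap_sub {C : Type*} [Fintype C] [DecidableEq C]
    (φ : C → ℝ → ℝ) (E : C → ℝ) {c c' : C} (h : c ≠ c') :
    ∑ x, φ x (E (Equiv.swap c c' x)) - ∑ x, φ x (E x)
      = φ c (E c') + φ c' (E c) - (φ c (E c) + φ c' (E c')) := by
  rw [← Finset.sum_sub_distrib, Fintype.sum_eq_add c c' h fun x hx => by
    rw [Equiv.swap_apply_of_ne_of_ne hx.1 hx.2, sub_self]]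
  simp only [Equiv.swap_apply_left, Equiv.swap_apply_right]
  ring

section Repairs

variable {C A : Type*} {lab : C → A} {w : A → ℝ} {M : Set ℝ} {Γ : ℝ → Set (A → ℕ)}
  {τ : ℝ} {D E : C → ℝ}

/-- The coincidence profile `p_E(v)` over the cells of `S`, definitionally the one in
`IsTauRepairOn`. -/
noncomputable def profileOn (S : Set C) (lab : C → A) (E : C → ℝ) (v : ℝ) : A → ℕ :=
  fun a => {c | c ∈ S ∧ lab c = a ∧ E c = v}.ncard

lemma finite_setOf_isTauRepairOn_univ [Finite C] (hM : M.Finite) :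
    {E | IsTauRepairOn univ lab w M Γ τ D E}.Finite :=
  (Finite.pi fun _ : C => hM).subset fun _ hE =>
    mem_univ_pi.2 fun c => hE.1 c (mem_univ c)

lemma profileOn_univ_comp_perm (σ : Equiv.Perm C) (hσ : ∀ x, lab (σ x) = lab x) (v : ℝ) :
    profileOn univ lab (E ∘ σ) v = profileOn univ lab E v := by
  funext a
  have hpre : {x | x ∈ univ ∧ lab x = a ∧ E (σ x) = v}
      = σ ⁻¹' {x | x ∈ univ ∧ lab x = a ∧ E x = v} := by
    ext x
    simp [hσ x]
  simp only [profileOn, Function.comp_apply, hpre]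
  exact ncard_preimage_of_injective_subset_range σ.injective (by simp)

lemma IsTauRepairOn.comp_swap [DecidableEq C] (hE : IsTauRepairOn univ lab w M Γ τ D E)
    {c c' : C} (hl : lab c = lab c') (hD : D c ≤ D c') (hEc : E c' ≤ E c) :
    IsTauRepairOn univ lab w M Γ τ D (E ∘ Equiv.swap c c') := by
  obtain ⟨hM, hΓ, hτ⟩ := hE
  have hlab : ∀ x, lab (Equiv.swap c c' x) = lab x := by
    intro x
    rw [Equiv.swap_apply_def]
    split_ifs <;> simp_all
  have hτc := abs_le.1 (hτ c (mem_univ c))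
  have hτc' := abs_le.1 (hτ c' (mem_univ c'))
  refine ⟨fun x _ => hM _ (mem_univ _), fun v hv => ?_, fun x _ => ?_⟩
  · have : profileOn univ lab E v ∈ Γ v := hΓ v hv
    rwa [← profileOn_univ_comp_perm _ hlab] at this
  · simp only [Function.comp_apply, Equiv.swap_apply_def]
    split_ifs with h₁ h₂
    · subst h₁
      exact abs_le.2 ⟨by linarith, by rw [hl]; linarith⟩
    · subst h₂
      exact abs_le.2 ⟨by rw [← hl]; linarith, by linarith⟩
    · exact hτ x (mem_univ x)

lemma costOn_univ [Fintype C] :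
    costOn univ lab w D E = ∑ c, w (lab c) * |D c - E c| := by
  simp [costOn]

lemma IsTauRepairOn.le_of_lab_eq_of_lt [Fintype C] (hw : ∀ a, 0 ≤ w a)
    (hE : IsTauRepairOn univ lab w M Γ τ D E)
    (htie : ∀ E', IsTauRepairOn univ lab w M Γ τ D E' →
      costOn univ lab w D E' ≤ costOn univ lab w D E → ∑ c, D c * E' c ≤ ∑ c, D c * E c)
    {c c' : C} (hl : lab c = lab c') (hlt : D c < D c') : E c ≤ E c' := by
  classical
  by_contra! hEc
  have hne : c ≠ c' := fun h => hlt.ne (congrArg D h)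
  have hF := hE.comp_swap hl hlt.le hEc.le
  have hcost : costOn univ lab w D (E ∘ Equiv.swap c c') ≤ costOn univ lab w D E := by
    have hdiff := Fintype.sum_comp_swap_sub (fun x y => w (lab x) * |D x - y|) E hne
    have hrearr := abs_sub_add_abs_sub_le_of_le hlt.le hEc.le
    simp only [costOn_univ, Function.comp_apply] at hdiff ⊢
    rw [← hl] at hdiff
    nlinarith [hw (lab c)]
  have hgain := Fintype.sum_comp_swap_sub (fun x y => D x * y) E hne
  have htie' := htie _ hF hcost
  simp only [Function.comp_apply] at htie'
  nlinarith

lemma profileOn_congr {S T : Set C} {v : ℝ} (h : ∀ x, E x = v → (x ∈ S ↔ x ∈ T)) :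
    profileOn S lab E v = profileOn T lab E v := by
  funext a
  simp only [profileOn]
  congr 1
  ext x
  exact ⟨fun ⟨hx, ha, hv⟩ => ⟨(h x hv).1 hx, ha, hv⟩,
    fun ⟨hx, ha, hv⟩ => ⟨(h x hv).2 hx, ha, hv⟩⟩

lemma profileOn_empty (v : ℝ) : profileOn ∅ lab E v = 0 := by
  funext a
  simp [profileOn]

lemma IsTauRepairOn.restrict_setOf_ne (hzero : ∀ v ∈ M, (fun _ => 0) ∈ Γ v)
    (hE : IsTauRepairOn univ lab w M Γ τ D E) (v : ℝ) :
    IsTauRepairOn {x | E x ≠ v} lab w M Γ τ D E := by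
  obtain ⟨hM, hΓ, hτ⟩ := hE
  refine ⟨fun x _ => hM x (mem_univ x), fun u hu => ?_, fun x _ => hτ x (mem_univ x)⟩
  show profileOn {x | E x ≠ v} lab E u ∈ Γ u
  by_cases huv : u = v
  · subst huv
    rw [profileOn_congr (T := ∅) (by simp), profileOn_empty]
    exact hzero u hu
  · rw [profileOn_congr (T := univ) fun x hx => by simp [hx, huv]]
    exact hΓ u hu

lemma profileOn_univ_piecewise [Finite C] (S : Set C) [DecidablePred (· ∈ S)]
    (E' E : C → ℝ) (v : ℝ) :
    profileOn univ lab (S.piecewise E' E) v = profileOn S lab E' v + profileOn Sᶜ lab E v := by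
  funext a
  simp only [profileOn, Pi.add_apply]
  rw [← ncard_union_eq (disjoint_left.2 fun x hx hx' => hx'.1 hx.1)]
  congr 1
  ext x
  by_cases hx : x ∈ S <;> simp [hx]

lemma IsTauRepairOn.piecewise_setOf_ne [Finite C]
    (hadd : ∀ v ∈ M, ∀ p q : A → ℕ, p ∈ Γ v → q ∈ Γ v →
      (fun a => p a + q a) ∈ Γ v)
    (hE : IsTauRepairOn univ lab w M Γ τ D E) {v : ℝ} {E' : C → ℝ}
    (hE' : IsTauRepairOn {x | E x ≠ v} lab w M Γ τ D E') :
    IsTauRepairOn univ lab w M Γ τ D ({x | E x ≠ v}.piecewise E' E) := by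
  classical
  obtain ⟨hM, hΓ, hτ⟩ := hE
  obtain ⟨hM', hΓ', hτ'⟩ := hE'
  refine ⟨fun x _ => ?_, fun u hu => ?_, fun x _ => ?_⟩
  · by_cases hx : E x ≠ v <;> simp [hx, hM' x, hM x]
  · show profileOn univ lab _ u ∈ Γ u
    have hE'u : profileOn {x | E x ≠ v} lab E' u ∈ Γ u := hΓ' u hu
    rw [profileOn_univ_piecewise]
    by_cases huv : u = v
    · subst huv
      rw [profileOn_congr (S := {x | E x ≠ u}ᶜ) (T := univ) (by simp)]
      exact hadd u hu _ _ hE'u (hΓ u hu)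
    · rwa [profileOn_congr (S := {x | E x ≠ v}ᶜ) (T := ∅) fun x hx => by simp [hx, huv],
        profileOn_empty, add_zero]
  · by_cases hx : E x ≠ v <;> simp [hx, hτ' x, hτ x]

lemma costOn_add_costOn_compl [Fintype C] (S : Set C) :
    costOn S lab w D E + costOn Sᶜ lab w D E = costOn univ lab w D E := by
  simp only [costOn, indicator_univ, ← Finset.sum_add_distrib]
  exact Finset.sum_congr rfl fun x _ => congr_fun (indicator_self_add_compl S _) x

lemma costOn_congr [Fintype C] {S : Set C} {E' : C → ℝ} (h : EqOn E E' S) :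
    costOn S lab w D E = costOn S lab w D E' := by
  unfold costOn
  rw [indicator_congr fun x hx => by rw [h hx]]

lemma costOn_le_of_costOn_univ_le_piecewise [Fintype C] (S : Set C)
    [DecidablePred (· ∈ S)] {E' : C → ℝ}
    (h : costOn univ lab w D E ≤ costOn univ lab w D (S.piecewise E' E)) :
    costOn S lab w D E ≤ costOn S lab w D E' := by
  rw [← costOn_add_costOn_compl S, ← costOn_add_costOn_compl S,
    costOn_congr (S := S) (S.piecewise_eqOn E' E),
    costOn_congr (S := Sᶜ) (S.piecewise_eqOn_compl E' E)] at h
  linarith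

end Repairs

theorem stmt_10_general {C A : Type*} [Fintype C] [Nonempty C]
    (M : Set ℝ) (hMfin : M.Finite)
    (lab : C → A) (w : A → ℝ) (hw : ∀ a, 0 ≤ w a)
    (Γ : ℝ → Set (A → ℕ))
    (hzero : ∀ v ∈ M, (fun _ => 0) ∈ Γ v)
    (hadd : ∀ v ∈ M, ∀ p q : A → ℕ, p ∈ Γ v → q ∈ Γ v →
      (fun a => p a + q a) ∈ Γ v)
    (τ : ℝ)
    (D : C → ℝ)
    (hex : ∃ E : C → ℝ, IsTauRepairOn Set.univ lab w M Γ τ D E) :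
    ∃ (E : C → ℝ) (C' : Set C),
      IsTauRepairOn Set.univ lab w M Γ τ D E ∧
      (∀ E' : C → ℝ, IsTauRepairOn Set.univ lab w M Γ τ D E' →
        costOn Set.univ lab w D E ≤ costOn Set.univ lab w D E') ∧
      (∀ c c' : C, lab c = lab c' → c' ∈ C' → D c < D c' → c ∈ C') ∧
      C' ≠ Set.univ ∧
      IsTauRepairOn C' lab w M Γ τ D E ∧
      (∀ E' : C → ℝ, IsTauRepairOn C' lab w M Γ τ D E' →
        costOn C' lab w D E ≤ costOn C' lab w D E') ∧
      (∀ c c' : C, c ∉ C' → c' ∉ C' → E c = E c') := by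
  classical
  obtain ⟨E, hE, hopt, htie⟩ :=
    (finite_setOf_isTauRepairOn_univ hMfin).exists_min_image_max_image hex
      (costOn univ lab w D) fun E => ∑ c, D c * E c
  obtain ⟨c₀, -, hc₀⟩ := Finset.univ.exists_max_image E Finset.univ_nonempty
  refine ⟨E, {x | E x ≠ E c₀}, hE, hopt, fun c c' hl hc' hlt => ?_,
    (ne_univ_iff_exists_notMem _).2 ⟨c₀, fun h => h rfl⟩, hE.restrict_setOf_ne hzero _,
    fun E' hE' =>
      costOn_le_of_costOn_univ_le_piecewise _ (hopt _ (hE.piecewise_setOf_ne hadd hE')),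
    fun c c' hc hc' => (not_not.1 hc).trans (not_not.1 hc').symm⟩
  exact ((hE.le_of_lab_eq_of_lt hw htie hl hlt).trans_lt
    ((hc₀ c' (Finset.mem_univ _)).lt_of_ne hc')).ne

/-- For a finite line metric `M ⊆ ℝ` and a coincidence constraint `Γ` whose value sets
contain the zero profile and are closed under addition: if any `(δ≤τ)`-repair of `D`
exists, then there are an optimal `(δ≤τ)`-repair `E` of `D` and a strict prefix `C'` of
the cells such that `E` restricted to `C'` is an optimal `(δ≤τ)`-repair of `D|C'` and
`E` is constant on the complement of `C'`. -/
theorem stmt_10 {C A : Type*} [Fintype C] [Nonempty C]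
    (M : Set ℝ) (hMfin : M.Finite)
    (lab : C → A) (w : A → ℝ) (hw : ∀ a, 0 ≤ w a)
    (Γ : ℝ → Set (A → ℕ))
    (hzero : ∀ v ∈ M, (fun _ => 0) ∈ Γ v)
    (hadd : ∀ v ∈ M, ∀ p q : A → ℕ, p ∈ Γ v → q ∈ Γ v →
      (fun a => p a + q a) ∈ Γ v)
    (τ : ℝ) (hτ : 0 ≤ τ)
    (D : C → ℝ) (hD : ∀ c, D c ∈ M)
    (hex : ∃ E : C → ℝ, IsTauRepairOn Set.univ lab w M Γ τ D E) :
    ∃ (E : C → ℝ) (C' : Set C),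
      IsTauRepairOn Set.univ lab w M Γ τ D E ∧
      (∀ E' : C → ℝ, IsTauRepairOn Set.univ lab w M Γ τ D E' →
        costOn Set.univ lab w D E ≤ costOn Set.univ lab w D E') ∧
      (∀ c c' : C, lab c = lab c' → c' ∈ C' → D c < D c' → c ∈ C') ∧
      C' ≠ Set.univ ∧
      IsTauRepairOn C' lab w M Γ τ D E ∧
      (∀ E' : C → ℝ, IsTauRepairOn C' lab w M Γ τ D E' →
        costOn C' lab w D E ≤ costOn C' lab w D E') ∧
      (∀ c c' : C, c ∉ C' → c' ∉ C' → E c = E c') :=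
  stmt_10_general M hMfin lab w hw Γ hzero hadd τ D hex
end

section
/- Let V be a finite set of variables and F a finite set of clauses, where each clause f ∈ F is a nonempty finite set of literals, a literal being a pair (x, b) ∈ V × Bool. Consider the vertex set P = F ⊕ V ⊕ (V × Bool), with adjacency: a clause vertex f is adjacent to a literal vertex (x, b) iff (x, b) ∈ f, and a variable vertex x is adjacent to the literal vertices (x, true) and (x, false); no other pairs of vertices are adjacent. Then the following are equivalent: (1) there exist functions E₁ : F → P and E₂ : V → P such that for every f ∈ F, E₁(f) equals the clause vertex f or is adjacent to it; for every x ∈ V, E₂(x) equals the variable vertex x or is adjacent to it; and every point of P in the image of E₁ is also in the image of E₂; (2) there exists an assignment σ : V → Bool such that every clause f ∈ F contains a literal (x, b) with σ(x) = b. (Correctness of the reduction from SAT showing NP-hardness of deciding existence of a (δ≤τ)-repair under the inclusion constraint A₁ ⊑ A₂.) -/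
/-
A clause cell can never stay in place, since a variable cell only reaches its own variable
vertex or one of that variable's two literal vertices. So every clause cell moves to a
literal of its clause, and the variable cell covering that literal sits on a literal of the
same variable; reading off the sign of the literal under each variable cell gives a
satisfying assignment. Conversely, put each variable cell on its true literal and each
clause cell on a literal of its clause made true.
-/

/-- Adjacency of the graph built from a CNF formula: a clause vertex `f` is adjacent to
a literal vertex `l` iff `l ∈ cl f`, and a variable vertex `x` is adjacent to the
literal vertices `(x, true)` and `(x, false)`; no other pairs are adjacent. -/
def SatAdj {V F : Type*} (cl : F → Finset (V × Bool)) :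
    (F ⊕ V ⊕ V × Bool) → (F ⊕ V ⊕ V × Bool) → Prop
  | Sum.inl f, Sum.inr (Sum.inr l) => l ∈ cl f
  | Sum.inr (Sum.inr l), Sum.inl f => l ∈ cl f
  | Sum.inr (Sum.inl x), Sum.inr (Sum.inr l) => l.1 = x
  | Sum.inr (Sum.inr l), Sum.inr (Sum.inl x) => l.1 = x
  | _, _ => False

namespace SatAdj

variable {V F : Type*} {cl : F → Finset (V × Bool)} {p : F ⊕ V ⊕ V × Bool}

theorem exists_lit_of_clause {f : F} (h : SatAdj cl (Sum.inl f) p) :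
    ∃ l ∈ cl f, p = Sum.inr (Sum.inr l) := by
  rcases p with g | x | l
  · exact h.elim
  · exact h.elim
  · exact ⟨l, h, rfl⟩

theorem exists_lit_of_var {x : V} (h : SatAdj cl (Sum.inr (Sum.inl x)) p) :
    ∃ b, p = Sum.inr (Sum.inr (x, b)) := by
  rcases p with g | y | ⟨y, b⟩
  · exact h.elim
  · exact h.elim
  · obtain rfl : y = x := h
    exact ⟨b, rfl⟩

end SatAdj

section Reduction

variable {V F : Type*} (cl : F → Finset (V × Bool))

def litSign : F ⊕ V ⊕ V × Bool → Bool
  | Sum.inr (Sum.inr l) => l.2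
  | _ => true

theorem exists_satisfying_of_repair (E₁ : F → F ⊕ V ⊕ V × Bool) (E₂ : V → F ⊕ V ⊕ V × Bool)
    (h₁ : ∀ f, E₁ f = Sum.inl f ∨ SatAdj cl (Sum.inl f) (E₁ f))
    (h₂ : ∀ x, E₂ x = Sum.inr (Sum.inl x) ∨ SatAdj cl (Sum.inr (Sum.inl x)) (E₂ x))
    (hincl : ∀ p, (∃ f, E₁ f = p) → ∃ x, E₂ x = p) :
    ∃ σ : V → Bool, ∀ f, ∃ l ∈ cl f, σ l.1 = l.2 := by
  have var_cell : ∀ x, E₂ x = Sum.inr (Sum.inl x) ∨ ∃ b, E₂ x = Sum.inr (Sum.inr (x, b)) :=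
    fun x => (h₂ x).imp_right SatAdj.exists_lit_of_var
  refine ⟨fun x => litSign (E₂ x), fun f => ?_⟩
  obtain ⟨l, hl, hfl⟩ : ∃ l ∈ cl f, E₁ f = Sum.inr (Sum.inr l) := by
    refine SatAdj.exists_lit_of_clause <| (h₁ f).resolve_left fun hf => ?_
    obtain ⟨x, hx⟩ := hincl _ ⟨f, hf⟩
    rcases var_cell x with h | ⟨b, h⟩ <;> simp [hx] at h
  obtain ⟨x, hx⟩ := hincl _ ⟨f, hfl⟩
  obtain rfl : x = l.1 := by
    rcases var_cell x with h | ⟨b, h⟩ <;> simp only [hx, reduceCtorEq, Sum.inr.injEq] at h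
    rw [h]
  exact ⟨l, hl, show litSign (E₂ l.1) = l.2 by rw [hx]; rfl⟩

theorem exists_repair_of_satisfying (σ : V → Bool) (hσ : ∀ f, ∃ l ∈ cl f, σ l.1 = l.2) :
    ∃ (E₁ : F → F ⊕ V ⊕ V × Bool) (E₂ : V → F ⊕ V ⊕ V × Bool),
      (∀ f, E₁ f = Sum.inl f ∨ SatAdj cl (Sum.inl f) (E₁ f)) ∧
      (∀ x, E₂ x = Sum.inr (Sum.inl x) ∨ SatAdj cl (Sum.inr (Sum.inl x)) (E₂ x)) ∧
      (∀ p, (∃ f, E₁ f = p) → ∃ x, E₂ x = p) := by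
  choose l hl hsat using hσ
  refine ⟨fun f => Sum.inr (Sum.inr (l f)), fun x => Sum.inr (Sum.inr (x, σ x)),
    fun f => Or.inr (hl f), fun x => Or.inr rfl, ?_⟩
  rintro p ⟨f, rfl⟩
  exact ⟨(l f).1, show Sum.inr (Sum.inr ((l f).1, σ (l f).1)) = _ by rw [hsat f]⟩

end Reduction

theorem stmt_12_general {V F : Type*}
    (cl : F → Finset (V × Bool)) :
    (∃ (E₁ : F → F ⊕ V ⊕ V × Bool) (E₂ : V → F ⊕ V ⊕ V × Bool),
      (∀ f : F, E₁ f = Sum.inl f ∨ SatAdj cl (Sum.inl f) (E₁ f)) ∧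
      (∀ x : V, E₂ x = Sum.inr (Sum.inl x) ∨
        SatAdj cl (Sum.inr (Sum.inl x)) (E₂ x)) ∧
      (∀ p : F ⊕ V ⊕ V × Bool, (∃ f, E₁ f = p) → ∃ x, E₂ x = p)) ↔
    (∃ σ : V → Bool, ∀ f : F, ∃ l ∈ cl f, σ l.1 = l.2) :=
  ⟨fun ⟨E₁, E₂, h₁, h₂, hincl⟩ => exists_satisfying_of_repair cl E₁ E₂ h₁ h₂ hincl,
    fun ⟨σ, hσ⟩ => exists_repair_of_satisfying cl σ hσ⟩

/-- Correctness of the reduction from SAT: in the clause/variable/literal graph, there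
exist placements `E₁` of the clause cells and `E₂` of the variable cells, each moving by
at most one edge, such that every point holding a clause cell also holds a variable cell
(inclusion constraint `A₁ ⊑ A₂`), if and only if the formula is satisfiable. -/
theorem stmt_12 {V F : Type*} [Fintype V] [Fintype F]
    (cl : F → Finset (V × Bool)) (hne : ∀ f, (cl f).Nonempty) :
    (∃ (E₁ : F → F ⊕ V ⊕ V × Bool) (E₂ : V → F ⊕ V ⊕ V × Bool),
      (∀ f : F, E₁ f = Sum.inl f ∨ SatAdj cl (Sum.inl f) (E₁ f)) ∧
      (∀ x : V, E₂ x = Sum.inr (Sum.inl x) ∨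
        SatAdj cl (Sum.inr (Sum.inl x)) (E₂ x)) ∧
      (∀ p : F ⊕ V ⊕ V × Bool, (∃ f, E₁ f = p) → ∃ x, E₂ x = p)) ↔
    (∃ σ : V → Bool, ∀ f : F, ∃ l ∈ cl f, σ l.1 = l.2) :=
  stmt_12_general cl
end

section
/- Let X be a finite set and S a finite family of subsets of X, each of size exactly 3. Then the following are equivalent: (1) there exists a function E : X → X ⊕ S such that for every x ∈ X, either E(x) = inl(x) or E(x) = inr(s) for some s ∈ S with x ∈ s, and for every point p ∈ X ⊕ S, the number of elements x ∈ X with E(x) = p is either 0 or 3; (2) there exists a subfamily S' ⊆ S whose members are pairwise disjoint and whose union is X (an exact cover of X by 3-sets). (Correctness of the reduction from exact cover by 3-sets showing NP-hardness of deciding existence of a (δ≤τ)-repair with a single attribute and a uniform coincidence constraint Γ = {0, 3}.) -/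
/-!
A repair cannot leave a cell at its own element vertex, since nothing else can move there and
that vertex would hold exactly one cell. So every element `x` moves to a set `g x ∋ x` of `S`.
The cells arriving at `g x` form a subset of `g x`, containing `x`, of size 0 or 3, hence all
of `g x`; this says precisely that the sets `g x` are pairwise disjoint, i.e. that they form an
exact cover. Conversely, an exact cover sends every element to the unique block containing it.
-/

open Set

section Selector

variable {α : Type*} {g : α → Finset α}

theorem setOf_apply_eq_subset (hg : ∀ x, x ∈ g x) (s : Finset α) : {x | g x = s} ⊆ ↑s := by
  rintro x rfl
  exact hg x

theorem setOf_apply_eq_self (hg : ∀ x, x ∈ g x) {x : α}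
    (h : {y | g y = g x}.ncard = 0 ∨ {y | g y = g x}.ncard = (g x).card) :
    {y | g y = g x} = ↑(g x) := by
  have hfin := (g x).finite_toSet.subset (setOf_apply_eq_subset hg _)
  refine eq_of_subset_of_ncard_le (setOf_apply_eq_subset hg _) ?_
  rcases h with h | h
  · exact absurd ((ncard_eq_zero hfin).1 h) (nonempty_iff_ne_empty.1 ⟨x, rfl⟩)
  · rw [h, ncard_coe_finset]

theorem setOf_apply_eq_of_pairwiseDisjoint {S : Set (Finset α)} (hS : S.PairwiseDisjoint id)
    (hgS : ∀ x, g x ∈ S) (hg : ∀ x, x ∈ g x) {s : Finset α} (hs : s ∈ S) :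
    {x | g x = s} = ↑s := by
  refine (setOf_apply_eq_subset hg s).antisymm fun x hx => ?_
  by_contra hne
  exact Finset.disjoint_left.1 (hS (hgS x) hs hne) (hg x) hx

theorem pairwiseDisjoint_range_of_setOf_apply_eq (hfib : ∀ x, {y | g y = g x} = ↑(g x)) :
    (range g).PairwiseDisjoint id := by
  rintro _ ⟨a, rfl⟩ _ ⟨b, rfl⟩ hab
  refine Finset.disjoint_left.2 fun z hza hzb => hab ?_
  have hza : z ∈ {y | g y = g a} := by rw [hfib a]; exact hza
  have hzb : z ∈ {y | g y = g b} := by rw [hfib b]; exact hzb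
  exact hza.symm.trans hzb

theorem exists_exactCover_iff_exists_selector (S : Finset (Finset α)) :
    (∃ S' ⊆ S, (∀ s ∈ S', ∀ t ∈ S', s ≠ t → Disjoint s t) ∧ ∀ x : α, ∃ s ∈ S', x ∈ s) ↔
      ∃ g : α → Finset α, (∀ x, g x ∈ S ∧ x ∈ g x) ∧ ∀ x, {y | g y = g x} = ↑(g x) := by
  classical
  constructor
  · rintro ⟨S', hS'S, hdisj, hcov⟩
    choose g hgS' hg using hcov
    exact ⟨g, fun x => ⟨hS'S (hgS' x), hg x⟩,
      fun x => setOf_apply_eq_of_pairwiseDisjoint hdisj hgS' hg (hgS' x)⟩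
  · rintro ⟨g, hgS, hfib⟩
    refine ⟨S.filter (· ∈ range g), Finset.filter_subset _ _, ?_, fun x => ?_⟩
    · intro s hs t ht
      exact pairwiseDisjoint_range_of_setOf_apply_eq hfib (Finset.mem_filter.1 hs).2
        (Finset.mem_filter.1 ht).2
    · exact ⟨g x, Finset.mem_filter.2 ⟨(hgS x).1, x, rfl⟩, (hgS x).2⟩

end Selector

theorem exists_eq_inr_of_ncard_ne_one {α : Type*} {S : Finset (Finset α)}
    {E : α → α ⊕ Finset α} (hE : ∀ x, E x = Sum.inl x ∨ ∃ s ∈ S, x ∈ s ∧ E x = Sum.inr s)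
    (hfib : ∀ p, {x | E x = p}.ncard ≠ 1) (x : α) : ∃ s ∈ S, x ∈ s ∧ E x = Sum.inr s := by
  refine (hE x).resolve_left fun hx => hfib (Sum.inl x) ?_
  have hsingle : {y | E y = Sum.inl x} = {x} := by
    ext y
    refine ⟨fun hy => ?_, fun hy => hy ▸ hx⟩
    rcases hE y with h | ⟨s, -, -, h⟩
    · exact Sum.inl_injective (h.symm.trans hy)
    · exact absurd (h.symm.trans hy) Sum.inr_ne_inl
  rw [hsingle, ncard_singleton]

theorem stmt_13_general {X : Type*}
    (S : Finset (Finset X)) (hS : ∀ s ∈ S, s.card = 3) :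
    (∃ E : X → X ⊕ Finset X,
      (∀ x : X, E x = Sum.inl x ∨ ∃ s ∈ S, x ∈ s ∧ E x = Sum.inr s) ∧
      (∀ p : X ⊕ Finset X,
        {x : X | E x = p}.ncard = 0 ∨ {x : X | E x = p}.ncard = 3)) ↔
    (∃ S' ⊆ S, (∀ s ∈ S', ∀ t ∈ S', s ≠ t → Disjoint s t) ∧
      ∀ x : X, ∃ s ∈ S', x ∈ s) := by
  rw [exists_exactCover_iff_exists_selector]
  constructor
  · rintro ⟨E, hE, hfib⟩
    choose g hgS hg hEg using exists_eq_inr_of_ncard_ne_one hE fun p => by have := hfib p; omega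
    obtain rfl : E = fun x => Sum.inr (g x) := funext hEg
    refine ⟨g, fun x => ⟨hgS x, hg x⟩, fun x => setOf_apply_eq_self hg ?_⟩
    simpa only [Sum.inr.injEq, hS _ (hgS x)] using hfib (Sum.inr (g x))
  · rintro ⟨g, hgS, hfib⟩
    refine ⟨fun x => Sum.inr (g x), fun x => .inr ⟨g x, (hgS x).1, (hgS x).2, rfl⟩, ?_⟩
    rintro (y | s)
    · simp
    · by_cases hs : s ∈ range g
      · obtain ⟨x, rfl⟩ := hs
        right
        simp only [Sum.inr.injEq, hfib x, ncard_coe_finset, hS _ (hgS x).1]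
      · left
        have hempty : {x | (Sum.inr (g x) : X ⊕ Finset X) = Sum.inr s} = ∅ :=
          eq_empty_of_forall_notMem fun x hx => hs ⟨x, Sum.inr_injective hx⟩
        rw [hempty, ncard_empty]

/-- Correctness of the reduction from exact cover by 3-sets: there is a placement `E`
of the element cells, each staying put or moving to an incident set vertex, with every
point holding either 0 or 3 cells, if and only if `X` has an exact cover by pairwise
disjoint members of `S`. -/
theorem stmt_13 {X : Type*} [Fintype X] [DecidableEq X]
    (S : Finset (Finset X)) (hS : ∀ s ∈ S, s.card = 3) :
    (∃ E : X → X ⊕ Finset X,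
      (∀ x : X, E x = Sum.inl x ∨ ∃ s ∈ S, x ∈ s ∧ E x = Sum.inr s) ∧
      (∀ p : X ⊕ Finset X,
        {x : X | E x = p}.ncard = 0 ∨ {x : X | E x = p}.ncard = 3)) ↔
    (∃ S' ⊆ S, (∀ s ∈ S', ∀ t ∈ S', s ≠ t → Disjoint s t) ∧
      ∀ x : X, ∃ s ∈ S', x ∈ s) :=
  stmt_13_general S hS
end
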